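/- If the displacement sequence u_j attains both values u_min and u_max with k_t(u_max − u_min) > 2μN within one period, then after at most one period any two trajectories of the friction map driven by the same monotone excursion from u_min to u_max coincide: the trajectory distance |T_j − T_j'| reaches 0 once both trajectories hit the same clamp boundary. -/
import Mathlib

private lemma friction_lower (c kt : ℝ) (hc : 0 ≤ c) (hkt : 0 < kt)
    (J : ℕ) (u : ℕ → ℝ)
    (hmono : ∀ i j : ℕ, i ≤ j → j ≤ J → u i ≤ u j)
    (T : ℕ → ℝ) (h0 : |T 0| ≤ c)
    (hT : ∀ j : ℕ,
      T (j + 1) = max (-c) (min c (T j + kt * (u (j + 1) - u j)))) :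
    ∀ j : ℕ, j ≤ J → min c (-c + kt * (u j - u 0)) ≤ T j := by
  intro j
  induction j with
  | zero =>
    intro _
    have h1 : -c ≤ T 0 := (abs_le.mp h0).1
    have : min c (-c + kt * (u 0 - u 0)) ≤ -c := by
      simp
    linarith
  | succ n ih =>
    intro hle
    have hn : n ≤ J := Nat.le_of_succ_le hle
    have ihn := ih hn
    have hd : 0 ≤ kt * (u (n + 1) - u n) := by
      have := hmono n (n + 1) (Nat.le_succ n) hle
      nlinarith
    have h1 : min c (T n + kt * (u (n + 1) - u n)) ≤ T (n + 1) := by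
      rw [hT n]; exact le_max_right _ _
    have h2 : min c (-c + kt * (u (n + 1) - u 0)) ≤
        min c (T n + kt * (u (n + 1) - u n)) := by
      rcases le_or_gt c (T n + kt * (u (n + 1) - u n)) with h | h
      · simpa [min_eq_left h] using min_le_left c (-c + kt * (u (n + 1) - u 0))
      · rw [min_eq_right h.le]
        have key : min c (-c + kt * (u n - u 0)) + kt * (u (n + 1) - u n) ≤
            T n + kt * (u (n + 1) - u n) := by linarith
        rcases min_cases c (-c + kt * (u n - u 0)) with ⟨he, _⟩ | ⟨he, _⟩
        · calc min c (-c + kt * (u (n + 1) - u 0)) ≤ c := min_le_left _ _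
            _ ≤ c + kt * (u (n + 1) - u n) := by linarith
            _ ≤ T n + kt * (u (n + 1) - u n) := by rw [he] at key; linarith
        · calc min c (-c + kt * (u (n + 1) - u 0))
              ≤ -c + kt * (u (n + 1) - u 0) := min_le_right _ _
            _ = (-c + kt * (u n - u 0)) + kt * (u (n + 1) - u n) := by ring
            _ ≤ T n + kt * (u (n + 1) - u n) := by rw [he] at key; linarith
    linarith

private lemma friction_end (c kt : ℝ) (hc : 0 ≤ c) (hkt : 0 < kt)
    (J : ℕ) (u : ℕ → ℝ)
    (hmono : ∀ i j : ℕ, i ≤ j → j ≤ J → u i ≤ u j)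
    (hamp : 2 * c < kt * (u J - u 0))
    (T : ℕ → ℝ) (h0 : |T 0| ≤ c)
    (hT : ∀ j : ℕ,
      T (j + 1) = max (-c) (min c (T j + kt * (u (j + 1) - u j)))) :
    T J = c := by
  have hlow := friction_lower c kt hc hkt J u hmono T h0 hT J le_rfl
  have hmin : min c (-c + kt * (u J - u 0)) = c := by
    apply min_eq_left; linarith
  rw [hmin] at hlow
  -- upper bound : J ≠ 0 since otherwise hamp contradicts hc
  rcases Nat.eq_zero_or_pos J with h | h
  · exfalso; subst h; nlinarith
  · obtain ⟨n, rfl⟩ := Nat.exists_eq_succ_of_ne_zero h.ne'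
    have hup : T (n + 1) ≤ c := by
      rw [hT n]
      apply max_le (by linarith) (min_le_left _ _)
    linarith

/-- During a monotone displacement excursion of amplitude exceeding `2μN/k_t`,
any two admissible trajectories of the friction map coincide at the end: both
are driven to the same clamp boundary. -/
theorem stmt_18 (μ N kt : ℝ) (hμN : 0 ≤ μ * N) (hkt : 0 < kt)
    (J : ℕ) (u : ℕ → ℝ)
    (hmono : ∀ i j : ℕ, i ≤ j → j ≤ J → u i ≤ u j)
    (hamp : 2 * (μ * N) < kt * (u J - u 0))
    (T T' : ℕ → ℝ) (h0 : |T 0| ≤ μ * N) (h0' : |T' 0| ≤ μ * N)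
    (hT : ∀ j : ℕ,
      T (j + 1) = max (-(μ * N)) (min (μ * N) (T j + kt * (u (j + 1) - u j))))
    (hT' : ∀ j : ℕ,
      T' (j + 1) = max (-(μ * N)) (min (μ * N) (T' j + kt * (u (j + 1) - u j)))) :
    T J = T' J := by
  rw [friction_end (μ * N) kt hμN hkt J u hmono hamp T h0 hT,
    friction_end (μ * N) kt hμN hkt J u hmono hamp T' h0' hT']
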